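/- Fix an integer ν ≥ 1 and let W : ℤ^ν → [0,∞) be bounded with W(n) → 0 as |n|₁ → ∞. If the set of eigenvalues of H₀ + W lying in (2ν, ∞) is infinite, then there exists a sequence (φ_k)_{k≥1} of nonzero, finitely supported vectors in ℓ²(ℤ^ν) such that ⟨φ_k, (H₀ + W)φ_k⟩ > 2ν‖φ_k‖² for every k, and for k ≠ m every point p in the support of φ_k and every point q in the support of φ_m satisfy max_{1≤i≤ν} |p_i − q_i| ≥ 2. -/

import Mathlib

noncomputable section

open scoped ComplexConjugate

namespace DHKS

abbrev L2 (α : Type*) := lp (fun _ : α => ℂ) 2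

variable {α β : Type*}

lemma memℓp_two_iff (f : α → ℂ) :
    Memℓp f 2 ↔ Summable (fun n => ‖f n‖ ^ (2 : ℝ)) := by
  rw [memℓp_gen_iff (by norm_num)]
  norm_num

lemma sum_sq_le (u : L2 α) (s : Finset α) :
    ∑ n ∈ s, ‖(u : α → ℂ) n‖ ^ (2:ℝ) ≤ ‖u‖ ^ (2:ℝ) := by
  simpa using lp.sum_rpow_le_norm_rpow (p := 2) (by norm_num) u s

lemma norm_le_of_sum_sq (u : L2 α) {C : ℝ} (hC : 0 ≤ C)
    (h : ∀ s : Finset α, ∑ n ∈ s, ‖(u : α → ℂ) n‖ ^ (2:ℝ) ≤ C ^ (2:ℝ)) : ‖u‖ ≤ C := by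
  refine lp.norm_le_of_forall_sum_le (p := 2) (by norm_num) hC ?_
  simpa using h

def compOp (σ : α → β) (hσ : Function.Injective σ) : L2 β →L[ℂ] L2 α :=
  LinearMap.mkContinuous
    { toFun := fun u => ⟨fun n => (u : β → ℂ) (σ n), by
        apply (memℓp_two_iff _).2
        exact ((memℓp_two_iff _).1 (lp.memℓp u)).comp_injective hσ⟩
      map_add' := by
        intro u v; apply lp.ext; funext n
        simp only [lp.coeFn_add, Pi.add_apply]
      map_smul' := by
        intro c u; apply lp.ext; funext n
        simp only [lp.coeFn_smul, Pi.smul_apply, RingHom.id_apply] }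
    1 (by
      intro u
      rw [one_mul]
      refine norm_le_of_sum_sq _ (norm_nonneg u) (fun s => ?_)
      classical
      calc ∑ n ∈ s, ‖(u : β → ℂ) (σ n)‖ ^ (2:ℝ)
          = ∑ m ∈ s.image σ, ‖(u : β → ℂ) m‖ ^ (2:ℝ) := by
            rw [Finset.sum_image (fun a _ b _ h => hσ h)]
        _ ≤ ‖u‖ ^ (2:ℝ) := sum_sq_le u _)

@[simp] lemma compOp_apply (σ : α → β) (hσ : Function.Injective σ) (u : L2 β) (n : α) :
    (compOp σ hσ u : α → ℂ) n = (u : β → ℂ) (σ n) := rfl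

def mulOp (V : α → ℝ) (C : ℝ) (hC : ∀ n, |V n| ≤ C) : L2 α →L[ℂ] L2 α :=
  LinearMap.mkContinuous
    { toFun := fun u => ⟨fun n => (V n : ℂ) * (u : α → ℂ) n, by
        apply (memℓp_two_iff _).2
        have h := (((memℓp_two_iff _).1 (lp.memℓp u)).mul_left ((max C 0) ^ (2:ℝ)))
        apply Summable.of_nonneg_of_le (fun n => by positivity) (fun n => ?_) h
        have h1 : ‖(V n : ℂ) * (u : α → ℂ) n‖ = |V n| * ‖(u : α → ℂ) n‖ := by
          rw [norm_mul, Complex.norm_real, Real.norm_eq_abs]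
        rw [h1, Real.mul_rpow (abs_nonneg _) (norm_nonneg _)]
        have h3 : |V n| ^ (2:ℝ) ≤ (max C 0) ^ (2:ℝ) :=
          Real.rpow_le_rpow (abs_nonneg _) (le_max_of_le_left (hC n)) (by norm_num)
        exact mul_le_mul_of_nonneg_right h3 (by positivity)⟩
      map_add' := by
        intro u v; apply lp.ext; funext n
        simp only [lp.coeFn_add, Pi.add_apply]
        ring
      map_smul' := by
        intro c u; apply lp.ext; funext n
        simp only [lp.coeFn_smul, Pi.smul_apply, RingHom.id_apply, smul_eq_mul]
        ring }
    (max C 0) (by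
      intro u
      refine norm_le_of_sum_sq _ (by positivity) (fun s => ?_)
      have key : ∀ n ∈ s, ‖(V n : ℂ) * (u : α → ℂ) n‖ ^ (2:ℝ)
          ≤ (max C 0) ^ (2:ℝ) * ‖(u : α → ℂ) n‖ ^ (2:ℝ) := by
        intro n _
        have h1 : ‖(V n : ℂ) * (u : α → ℂ) n‖ = |V n| * ‖(u : α → ℂ) n‖ := by
          rw [norm_mul, Complex.norm_real, Real.norm_eq_abs]
        rw [h1, Real.mul_rpow (abs_nonneg _) (norm_nonneg _)]
        have h3 : |V n| ^ (2:ℝ) ≤ (max C 0) ^ (2:ℝ) :=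
          Real.rpow_le_rpow (abs_nonneg _) (le_max_of_le_left (hC n)) (by norm_num)
        exact mul_le_mul_of_nonneg_right h3 (by positivity)
      calc ∑ n ∈ s, ‖(V n : ℂ) * (u : α → ℂ) n‖ ^ (2:ℝ)
          ≤ ∑ n ∈ s, (max C 0) ^ (2:ℝ) * ‖(u : α → ℂ) n‖ ^ (2:ℝ) := Finset.sum_le_sum key
        _ = (max C 0) ^ (2:ℝ) * ∑ n ∈ s, ‖(u : α → ℂ) n‖ ^ (2:ℝ) := by rw [Finset.mul_sum]
        _ ≤ (max C 0) ^ (2:ℝ) * ‖u‖ ^ (2:ℝ) :=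
            mul_le_mul_of_nonneg_left (sum_sq_le u _) (by positivity)
        _ = (max C 0 * ‖u‖) ^ (2:ℝ) :=
            (Real.mul_rpow (le_max_right _ _) (norm_nonneg _)).symm)

@[simp] lemma mulOp_apply (V : α → ℝ) (C : ℝ) (hC : ∀ n, |V n| ≤ C) (u : L2 α) (n : α) :
    (mulOp V C hC u : α → ℂ) n = (V n : ℂ) * (u : α → ℂ) n := rfl

def extOp (σ : α → β) (hσ : Function.Injective σ) : L2 α →L[ℂ] L2 β :=
  LinearMap.mkContinuous
    { toFun := fun u => ⟨Function.extend σ (u : α → ℂ) 0, by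
        apply (memℓp_two_iff _).2
        have hpt : (fun b => ‖Function.extend σ (u : α → ℂ) 0 b‖ ^ (2:ℝ))
            = Function.extend σ (fun a => ‖(u : α → ℂ) a‖ ^ (2:ℝ)) 0 := by
          funext b
          rcases em (∃ a, σ a = b) with ⟨a, rfl⟩ | hb
          · rw [hσ.extend_apply, hσ.extend_apply]
          · rw [Function.extend_apply' _ _ _ hb, Function.extend_apply' _ _ _ hb]
            simp [Real.zero_rpow (by norm_num : (2:ℝ) ≠ 0)]
        rw [hpt, summable_extend_zero hσ]
        exact (memℓp_two_iff _).1 (lp.memℓp u)⟩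
      map_add' := by
        intro u v; apply lp.ext; funext b
        simp only [lp.coeFn_add, Pi.add_apply]
        rcases em (∃ a, σ a = b) with ⟨a, rfl⟩ | hb
        · rw [hσ.extend_apply, hσ.extend_apply, hσ.extend_apply]
          simp [lp.coeFn_add]
        · rw [Function.extend_apply' _ _ _ hb, Function.extend_apply' _ _ _ hb,
            Function.extend_apply' _ _ _ hb]
          simp
      map_smul' := by
        intro c u; apply lp.ext; funext b
        simp only [lp.coeFn_smul, Pi.smul_apply, RingHom.id_apply, smul_eq_mul]
        rcases em (∃ a, σ a = b) with ⟨a, rfl⟩ | hb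
        · rw [hσ.extend_apply, hσ.extend_apply]
          simp [lp.coeFn_smul]
        · rw [Function.extend_apply' _ _ _ hb, Function.extend_apply' _ _ _ hb]
          simp }
    1 (by
      intro u
      rw [one_mul]
      refine norm_le_of_sum_sq _ (norm_nonneg u) (fun s => ?_)
      have hpt : (fun b => ‖Function.extend σ (u : α → ℂ) 0 b‖ ^ (2:ℝ))
          = Function.extend σ (fun a => ‖(u : α → ℂ) a‖ ^ (2:ℝ)) 0 := by
        funext b
        rcases em (∃ a, σ a = b) with ⟨a, rfl⟩ | hb
        · rw [hσ.extend_apply, hσ.extend_apply]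
        · rw [Function.extend_apply' _ _ _ hb, Function.extend_apply' _ _ _ hb]
          simp [Real.zero_rpow (by norm_num : (2:ℝ) ≠ 0)]
      have hsumm : Summable (fun a => ‖(u : α → ℂ) a‖ ^ (2:ℝ)) :=
        (memℓp_two_iff _).1 (lp.memℓp u)
      calc ∑ b ∈ s, ‖Function.extend σ (u : α → ℂ) 0 b‖ ^ (2:ℝ)
          ≤ ∑' b, ‖Function.extend σ (u : α → ℂ) 0 b‖ ^ (2:ℝ) := by
            refine Summable.sum_le_tsum s (fun b _ => by positivity) ?_
            rw [hpt, summable_extend_zero hσ]; exact hsumm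
        _ = ∑' a, ‖(u : α → ℂ) a‖ ^ (2:ℝ) := by
            rw [hpt, tsum_extend_zero hσ]
        _ = ‖u‖ ^ (2:ℝ) := by
            simpa using (lp.norm_rpow_eq_tsum (p := 2) (by norm_num) u).symm)

lemma extOp_apply (σ : α → β) (hσ : Function.Injective σ) (u : L2 α) (b : β) :
    (extOp σ hσ u : β → ℂ) b = Function.extend σ (u : α → ℂ) 0 b := rfl

/-- The real quadratic form ⟨φ, A φ⟩ of an operator. -/
def quadForm (A : L2 α →L[ℂ] L2 α) (φ : L2 α) : ℝ :=
  (inner ℂ φ (A φ) : ℂ).re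

def IsEigenvalue (A : L2 α →L[ℂ] L2 α) (E : ℝ) : Prop :=
  ∃ u : L2 α, u ≠ 0 ∧ A u = (E : ℂ) • u

lemma abs_mul_sq_le {γ x Cb : ℝ} (h : |x| ≤ Cb) : |γ * x ^ 2| ≤ |γ| * Cb ^ 2 := by
  have h1 := abs_le.1 h
  rw [abs_mul, abs_of_nonneg (sq_nonneg x)]
  exact mul_le_mul_of_nonneg_left (sq_le_sq' (by linarith [h1.1]) h1.2) (abs_nonneg γ)

end DHKS

namespace DHKS

abbrev Zlat (ν : ℕ) := Fin ν → ℤ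

/-- The ℓ¹-norm `|n|₁ = |n₁| + ⋯ + |n_ν|` of a lattice point. -/
def normOne {ν : ℕ} (n : Zlat ν) : ℕ := ∑ i, (n i).natAbs

def unitVec (ν : ℕ) (i : Fin ν) : Zlat ν := fun k => if k = i then 1 else 0

/-- The free discrete Schrödinger operator `(H₀ u)(n) = ∑_{|j|₁ = 1} u(n+j)`
on `ℓ²(ℤ^ν)`, written as the sum over translations by `± eᵢ`. -/
def H0 (ν : ℕ) : L2 (Zlat ν) →L[ℂ] L2 (Zlat ν) :=
  ∑ i : Fin ν,
    (compOp (fun n => n + unitVec ν i) (add_left_injective _) +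
      compOp (fun n => n + (-unitVec ν i)) (add_left_injective _))

lemma H0_apply {ν : ℕ} (u : L2 (Zlat ν)) (n : Zlat ν) :
    (H0 ν u : Zlat ν → ℂ) n =
      ∑ i : Fin ν, ((u : Zlat ν → ℂ) (n + unitVec ν i) + (u : Zlat ν → ℂ) (n - unitVec ν i)) := by
  simp [H0, ContinuousLinearMap.sum_apply, lp.coeFn_sum, Finset.sum_apply,
    ContinuousLinearMap.add_apply, lp.coeFn_add, Pi.add_apply, sub_eq_add_neg]
  exact Finset.sum_apply n _ _

/-- The unitary `(U φ)(n) = (-1)^{|n|₁} φ(n)`. -/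
def Uop (ν : ℕ) : L2 (Zlat ν) →L[ℂ] L2 (Zlat ν) :=
  mulOp (fun n => (-1 : ℝ) ^ normOne n) 1 (fun n => by simp [abs_pow])

def schrodinger (ν : ℕ) (V : Zlat ν → ℝ) (C : ℝ) (hC : ∀ n, |V n| ≤ C) :
    L2 (Zlat ν) →L[ℂ] L2 (Zlat ν) :=
  H0 ν + mulOp V C hC

/-- The quantity `Δ(φ₊, φ₋; V) = ⟨φ₊, (H-2ν)φ₊⟩ + ⟨φ₋, (-H-2ν)φ₋⟩`. -/
def Delta (ν : ℕ) (V : Zlat ν → ℝ) (C : ℝ) (hC : ∀ n, |V n| ≤ C)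
    (φp φm : L2 (Zlat ν)) : ℝ :=
  quadForm (schrodinger ν V C hC - ((2 * (ν:ℝ) : ℝ) : ℂ) • 1) φp +
    quadForm (-schrodinger ν V C hC - ((2 * (ν:ℝ) : ℝ) : ℂ) • 1) φm

end DHKS

/-! Eigenvectors of the self-adjoint operator `H = H₀ + W` for distinct eigenvalues above `2ν`
are orthogonal, so `⟨φ, Hφ⟩ > 2ν‖φ‖²` for every nonzero `φ` in their span. For a finite set `F`,
`|F| + 1` of them span a space containing a nonzero vector vanishing on `F`; truncating it to a
large finite set keeps the strict inequality, by continuity, and does not enlarge its support.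
Choosing `φ_k` in this way so as to avoid the points at sup-distance `≤ 1` from the supports of
`φ_0, …, φ_{k-1}` gives the sequence. -/

open Module End Finset in
theorem LinearMap.IsSymmetric.lt_re_inner_sum_eigenvectors {𝕜 E ι : Type*} [RCLike 𝕜]
    [NormedAddCommGroup E] [InnerProductSpace 𝕜 E] [Fintype ι] {T : E →ₗ[𝕜] E}
    (hT : T.IsSymmetric) {μ : ι → ℝ} (hμ : Function.Injective μ) {c : ℝ} (hc : ∀ i, c < μ i)
    {x : ι → E} (hx : ∀ i, x i ∈ eigenspace T (μ i : 𝕜)) (h0 : ∑ i, x i ≠ 0) :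
    c * ‖∑ i, x i‖ ^ 2 < RCLike.re (inner 𝕜 (∑ i, x i) (T (∑ i, x i))) := by
  have hV := hT.orthogonalFamily_eigenspaces.comp (RCLike.ofReal_injective.comp hμ)
  let l : ∀ i, eigenspace T (μ i : 𝕜) := fun i => ⟨x i, hx i⟩
  have hnorm : ‖∑ i, x i‖ ^ 2 = ∑ i, ‖x i‖ ^ 2 := hV.norm_sum l univ
  have hinner : RCLike.re (inner 𝕜 (∑ i, x i) (T (∑ i, x i))) = ∑ i, μ i * ‖x i‖ ^ 2 := by
    have hTx : T (∑ i, x i) = ∑ i, (μ i : 𝕜) • x i := by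
      simp only [map_sum, mem_eigenspace_iff.1 (hx _)]
    have hsum : inner 𝕜 (∑ i, x i) (∑ i, (μ i : 𝕜) • x i)
        = ∑ i, inner 𝕜 (l i) ((μ i : 𝕜) • l i) :=
      hV.inner_sum l (fun i => (μ i : 𝕜) • l i) univ
    rw [hTx, hsum, map_sum]
    refine sum_congr rfl fun i _ => ?_
    rw [Submodule.coe_inner, SetLike.val_smul, inner_smul_right, inner_self_eq_norm_sq_to_K,
      ← RCLike.ofReal_pow, ← RCLike.ofReal_mul, RCLike.ofReal_re]
  obtain ⟨j, hj⟩ : ∃ j, x j ≠ 0 := by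
    by_contra! h
    exact h0 (by simp [h])
  rw [hnorm, hinner, mul_sum]
  exact sum_lt_sum (fun i _ => by gcongr; exact (hc i).le)
    ⟨j, mem_univ _, by gcongr; exact hc j⟩

open scoped ENNReal in
theorem lp.exists_finite_support_subset_mem_nhds {α E : Type*} [NormedAddCommGroup E]
    {p : ℝ≥0∞} [Fact (1 ≤ p)] (hp : p ≠ ⊤) {f : lp (fun _ : α => E) p}
    {U : Set (lp (fun _ : α => E) p)} (hU : U ∈ nhds f) :
    ∃ g ∈ U, (Function.support ⇑g).Finite ∧ Function.support ⇑g ⊆ Function.support ⇑f := by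
  classical
  obtain ⟨s, hs⟩ := Filter.Eventually.exists (f := Filter.atTop) (lp.hasSum_single hp f hU)
  have hsupp : Function.support ⇑(∑ i ∈ s, lp.single p i (f i)) = ↑s ∩ Function.support ⇑f := by
    ext a
    rw [Function.mem_support, lp.coeFn_sum, Finset.sum_apply]
    simp [lp.single_apply, Finset.sum_pi_single]
  refine ⟨_, hs, ?_, ?_⟩ <;> rw [hsupp]
  exacts [s.finite_toSet.inter_of_left _, Set.inter_subset_right]

open scoped ENNReal in
theorem lp.exists_sum_smul_ne_zero_eq_zero_on_finset {𝕜 α ι : Type*} [NormedField 𝕜] [Fintype ι]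
    {p : ℝ≥0∞} [Fact (1 ≤ p)] {v : ι → lp (fun _ : α => 𝕜) p} (hv : LinearIndependent 𝕜 v)
    (F : Finset α) (hF : F.card < Fintype.card ι) :
    ∃ c : ι → 𝕜, ∑ i, c i • v i ≠ 0 ∧ ∀ a ∈ F, (∑ i, c i • v i : lp (fun _ : α => 𝕜) p) a = 0 := by
  let restrict : (ι → 𝕜) →ₗ[𝕜] (F → 𝕜) :=
    (LinearMap.pi fun a : F => lp.evalₗ (𝕜 := 𝕜) _ p (a : α)).comp (Fintype.linearCombination 𝕜 v)
  obtain ⟨c, hc, hc0⟩ := (Submodule.ne_bot_iff _).1 (LinearMap.ker_ne_bot_of_finrank_lt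
    (f := restrict) (by simpa using hF))
  refine ⟨c, fun h => hc0 (funext (Fintype.linearIndependent_iff.1 hv c h)), fun a ha => ?_⟩
  rw [lp.coeFn_sum, Finset.sum_apply]
  simpa [restrict, Fintype.linearCombination_apply] using congrFun hc ⟨a, ha⟩

theorem exists_seq_pairwise_not_rel {α X : Type*} {R : α → α → Prop} (hR : Std.Symm R)
    (hRfin : ∀ a, {b | R a b}.Finite) {P : X → Prop} {s : X → Set α}
    (h : ∀ F : Finset α, ∃ x, P x ∧ (s x).Finite ∧ Disjoint (s x) ↑F) :
    ∃ x : ℕ → X, (∀ k, P (x k) ∧ (s (x k)).Finite) ∧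
      Pairwise fun k m => ∀ a ∈ s (x k), ∀ b ∈ s (x m), ¬ R a b := by
  classical
  choose pick hP hfin hdisj using h
  let nbhd (F : Finset α) : Finset α := F.biUnion fun a => (hRfin a).toFinset
  -- `S k` is the union of the supports of `x 0, …, x (k - 1)`
  let S : ℕ → Finset α := fun k => Nat.rec ∅ (fun _ Sk => Sk ∪ (hfin (nbhd Sk)).toFinset) k
  let x (k : ℕ) : X := pick (nbhd (S k))
  have hS : Monotone S := monotone_nat_of_le_succ fun k => Finset.subset_union_left
  have hxS (k : ℕ) : s (x k) ⊆ S (k + 1) := fun a ha =>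
    Finset.mem_union_right _ ((hfin _).mem_toFinset.2 ha)
  have hlt {k m : ℕ} (hkm : k < m) : ∀ a ∈ s (x k), ∀ b ∈ s (x m), ¬ R a b := by
    intro a ha b hb hab
    have hb' : b ∈ nbhd (S m) :=
      Finset.mem_biUnion.2 ⟨a, hS hkm (hxS k ha), (hRfin a).mem_toFinset.2 hab⟩
    exact Set.disjoint_left.1 (hdisj _) hb hb'
  refine ⟨x, fun k => ⟨hP _, hfin _⟩, fun k m hkm => ?_⟩
  rcases hkm.lt_or_gt with h | h
  · exact hlt h
  · exact fun a ha b hb hab => hlt h b hb a ha (hR.symm _ _ hab)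

theorem finite_setOf_forall_abs_sub_lt {ι : Type*} [Finite ι] (p : ι → ℤ) (r : ℤ) :
    {q : ι → ℤ | ∀ i, |p i - q i| < r}.Finite :=
  (Set.Finite.pi fun i => Set.finite_Ioo (p i - r) (p i + r)).subset fun q hq i _ => by
    have := abs_lt.1 (hq i)
    constructor <;> linarith

namespace DHKS

variable {α β : Type*}

theorem inner_compOp_equiv (e : α ≃ β) (u : L2 α) (v : L2 β) :
    inner ℂ u (compOp e e.injective v) = inner ℂ (compOp e.symm e.symm.injective u) v := by
  rw [lp.inner_eq_tsum, lp.inner_eq_tsum, ← e.tsum_eq]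
  simp

theorem compOp_add_neg_eq_adjoint [AddGroup α] (a : α) :
    compOp (· + -a) (add_left_injective _) =
      ContinuousLinearMap.adjoint (compOp (· + a) (add_left_injective _)) :=
  (ContinuousLinearMap.eq_adjoint_iff _ _).2 fun u v =>
    (inner_compOp_equiv (Equiv.addRight a) u v).symm.trans (by congr 2)

theorem isSelfAdjoint_H0 (ν : ℕ) : IsSelfAdjoint (H0 ν) := by
  refine isSelfAdjoint_sum _ fun i _ => ?_
  rw [compOp_add_neg_eq_adjoint, ← ContinuousLinearMap.star_eq_adjoint]
  exact IsSelfAdjoint.add_star_self _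

theorem isSelfAdjoint_mulOp (V : α → ℝ) (C : ℝ) (hC : ∀ n, |V n| ≤ C) :
    IsSelfAdjoint (mulOp V C hC) :=
  ContinuousLinearMap.isSelfAdjoint_iff_isSymmetric.2 fun u v => by
    rw [ContinuousLinearMap.coe_coe, lp.inner_eq_tsum, lp.inner_eq_tsum]
    refine tsum_congr fun n => ?_
    simp only [mulOp_apply, RCLike.inner_apply, map_mul, Complex.conj_ofReal]
    ring

theorem continuous_quadForm (H : L2 α →L[ℂ] L2 α) : Continuous (quadForm H) :=
  Complex.continuous_re.comp (continuous_id.inner H.continuous)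

open Module End in
theorem exists_finite_support_disjoint_lt_quadForm {H : L2 α →L[ℂ] L2 α} (hH : IsSelfAdjoint H)
    {c : ℝ} (hinf : {E : ℝ | IsEigenvalue H E ∧ c < E}.Infinite) (F : Finset α) :
    ∃ φ : L2 α, c * ‖φ‖ ^ 2 < quadForm H φ ∧ (Function.support ⇑φ).Finite ∧
      Disjoint (Function.support ⇑φ) ↑F := by
  obtain ⟨t, hts, htcard⟩ := hinf.exists_subset_card_eq (F.card + 1)
  choose v hv0 hv using fun E : t => (hts E.2).1
  have hvec (E : t) : HasEigenvector (H : L2 α →ₗ[ℂ] L2 α) ((E : ℝ) : ℂ) (v E) :=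
    ⟨mem_eigenspace_iff.2 (hv E), hv0 E⟩
  obtain ⟨a, hψ0, hψF⟩ := lp.exists_sum_smul_ne_zero_eq_zero_on_finset
    (eigenvectors_linearIndependent' _ _ (Complex.ofReal_injective.comp Subtype.val_injective)
      v hvec) F (by simp [htcard])
  have hψ : c * ‖∑ E, a E • v E‖ ^ 2 < quadForm H (∑ E, a E • v E) :=
    hH.isSymmetric.lt_re_inner_sum_eigenvectors Subtype.val_injective (fun E => (hts E.2).2)
      (fun E => Submodule.smul_mem _ _ (hvec E).1) hψ0
  obtain ⟨φ, hφ, hfin, hsupp⟩ := lp.exists_finite_support_subset_mem_nhds ENNReal.ofNat_ne_top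
    ((isOpen_lt (continuous_const.mul (continuous_norm.pow 2)) (continuous_quadForm H)).mem_nhds hψ)
  exact ⟨φ, hφ, hfin, Set.disjoint_left.2 fun p hp hpF => hsupp hp (hψF p hpF)⟩

theorem statement3_general (ν : ℕ) (W : Zlat ν → ℝ)
    (C : ℝ) (hC : ∀ n, |W n| ≤ C)
    (hinf : {E : ℝ | IsEigenvalue (H0 ν + mulOp W C hC) E ∧ 2 * (ν:ℝ) < E}.Infinite) :
    ∃ φ : ℕ → L2 (Zlat ν),
      (∀ k, φ k ≠ 0) ∧
      (∀ k, (Function.support ((φ k : Zlat ν → ℂ))).Finite) ∧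
      (∀ k, quadForm (H0 ν + mulOp W C hC) (φ k) > 2 * (ν:ℝ) * ‖φ k‖ ^ 2) ∧
      (∀ k m, k ≠ m → ∀ p ∈ Function.support ((φ k : Zlat ν → ℂ)),
        ∀ q ∈ Function.support ((φ m : Zlat ν → ℂ)), ∃ i : Fin ν, 2 ≤ |p i - q i|) := by
  have hH := (isSelfAdjoint_H0 ν).add (isSelfAdjoint_mulOp W C hC)
  obtain ⟨φ, hφ, hsep⟩ := exists_seq_pairwise_not_rel
    (R := fun p q : Zlat ν => ∀ i, |p i - q i| < 2) ⟨fun p q h i => abs_sub_comm (q i) (p i) ▸ h i⟩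
    (fun p => finite_setOf_forall_abs_sub_lt p 2)
    (exists_finite_support_disjoint_lt_quadForm hH hinf)
  refine ⟨φ, fun k h0 => ?_, fun k => (hφ k).2, fun k => (hφ k).1, fun k m hkm p hp q hq => ?_⟩
  · simpa [h0, quadForm] using (hφ k).1
  · simpa only [not_forall, not_lt] using hsep hkm p hp q hq

/-- Lemma 3.2: if `W ≥ 0`, `W(n) → 0` and `H₀ + W` has infinitely many
eigenvalues in `(2ν, ∞)`, then there is a sequence of nonzero finitely supported vectors
`φ_k` with `⟨φ_k, (H₀+W)φ_k⟩ > 2ν‖φ_k‖²` whose supports are pairwise at sup-distance ≥ 2. -/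
theorem statement3 (ν : ℕ) (hν : 1 ≤ ν) (W : Zlat ν → ℝ) (hW : ∀ n, 0 ≤ W n)
    (C : ℝ) (hC : ∀ n, |W n| ≤ C)
    (hW0 : Filter.Tendsto W Filter.cofinite (nhds 0))
    (hinf : {E : ℝ | IsEigenvalue (H0 ν + mulOp W C hC) E ∧ 2 * (ν:ℝ) < E}.Infinite) :
    ∃ φ : ℕ → L2 (Zlat ν),
      (∀ k, φ k ≠ 0) ∧
      (∀ k, (Function.support ((φ k : Zlat ν → ℂ))).Finite) ∧
      (∀ k, quadForm (H0 ν + mulOp W C hC) (φ k) > 2 * (ν:ℝ) * ‖φ k‖ ^ 2) ∧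
      (∀ k m, k ≠ m → ∀ p ∈ Function.support ((φ k : Zlat ν → ℂ)),
        ∀ q ∈ Function.support ((φ m : Zlat ν → ℂ)), ∃ i : Fin ν, 2 ≤ |p i - q i|) :=
  statement3_general ν W C hC hinf

end DHKS
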